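/- Let q : {α−1+s : s = 0,…,b+1} → [0,∞) be a nontrivial function with Σ_{s=0}^{b+1} G(s+α−1,s)·q(s+α−1) > 0 and Σ_{s ∈ S} λ·G(s+α−1,s)·q(s+α−1) > 0, where λ ∈ (0,1) satisfies min_{t ∈ I} G(t,s) ≥ λ·G(s+α−1,s) for every integer s ∈ {0,1,…,b+1} and S := { integer s : (b+α)/4 ≤ s ≤ 3(b+α)/4 }. Let f : [0,∞) → [0,∞) be continuous and suppose there exist constants 0 < r₁ < r₂ such that f(x) ≥ γ*·r₁ for all x ∈ [0,r₁] and f(x) ≤ γ·r₂ for all x ∈ [0,r₂]. Then the discrete fractional boundary value problem Δ^{α}y(t) + q(t+α−1)·f(y(t+α−1)) = 0 for t = 0,…,b+1, y(α−2) = y(α+b+1) = 0, has at least one solution y : T_b → ℝ with y(t) ≥ 0 for all t ∈ T_b and r₁ ≤ max_{t ∈ T_b} |y(t)| ≤ r₂. -/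

import Mathlib

/-- Falling power `x^[y] = Γ(x+1)/Γ(x-y+1)`; it equals 0 when `x-y+1` is a
nonpositive integer since `Real.Gamma` vanishes there (and division by zero is zero). -/
noncomputable def fp (x y : ℝ) : ℝ := Real.Gamma (x + 1) / Real.Gamma (x - y + 1)

/-- The Green function `G(t,s)` of the discrete fractional boundary value problem,
for `t ∈ T_b` (a real number) and an integer `s ∈ {0,1,…,b+1}`. -/
noncomputable def G (α : ℝ) (b : ℕ) (t : ℝ) (s : ℕ) : ℝ :=
  if (s : ℝ) ≤ t - α + 1 then
    1 / Real.Gamma α *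
      (fp t (α - 1) * fp (α + b - s) (α - 1) / fp (α + b + 1) (α - 1) - fp (t - s - 1) (α - 1))
  else
    1 / Real.Gamma α * (fp t (α - 1) * fp (α + b - s) (α - 1) / fp (α + b + 1) (α - 1))

/-- A function `y : T_b → ℝ`, `T_b = {α-2+k : k = 0,…,b+3}`, is encoded as `y : ℕ → ℝ`
via `k ↦ y(α-2+k)`.  `fracSum α y k` is the discrete fractional sum
`(Δ^{-(2-α)} y)(t)` of order `2-α ∈ [0,1)` starting at `a = α-2`, evaluated at the
point `t = a + (2-α) + k = k`; when `α = 2` we use the convention `Δ^0 y = y`. -/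
noncomputable def fracSum (α : ℝ) (y : ℕ → ℝ) (k : ℕ) : ℝ :=
  if α = 2 then y k
  else 1 / Real.Gamma (2 - α) *
    ∑ j ∈ Finset.range (k + 1), fp ((k : ℝ) - (j : ℝ) + 1 - α) (1 - α) * y j

/-- The discrete fractional difference `(Δ^α y)(t) = Δ²(Δ^{-(2-α)} y)(t)` at `t ∈ ℕ`,
where `Δ` is the forward difference. -/
noncomputable def fracDiff (α : ℝ) (y : ℕ → ℝ) (t : ℕ) : ℝ :=
  fracSum α y (t + 2) - 2 * fracSum α y (t + 1) + fracSum α y t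

/-!
Instead of Krasnosel'skii's cone fixed point theorem, the solution is found by shooting. Truncate
`f` to `[0, r₂]`; the resulting `F` is continuous, nonnegative and bounded by `γ r₂`. The leading
coefficient of `Δ^α` is `1`, so `Δ^α y(t) = -q(t) F(y(t+1))` determines `y(t+2)` from the earlier
values, and the initial values `y(0) = 0`, `y(1) = c` give solutions `y_c` continuous in `c`.

By a Chu–Vandermonde identity for Gamma ratios, the fractional sum of order `2 - α` turns
`t^[α-1]` and `(t-s-1)^[α-1]` into `Γ(α)` times a linear function and the positive part of one.
Hence `Δ^α t^[α-1] = 0` and `Δ^α G(·,s) = -δ_s`, so `y_c = (c - Gh(1)) t^[α-1]/Γ(α) + Gh`, where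
`Gh = Σ_s G(·,s) h(s)` and `h = q F(y_c)`. Each `G(·,s)` increases up to `s+α-1` and then decreases
to `0`, so `0 ≤ Gh ≤ γ r₂ Σ_s G(s+α-1,s) q(s) = r₂`. Thus `c ↦ y_c(b+3)` changes sign on
`[0, r₂]`, and at a zero `y = Gh` solves the boundary value problem with `0 ≤ y ≤ r₂`, where the
truncation is inactive. If `‖y‖ < r₁`, then `f(y) ≥ γ* r₁` everywhere, and at a node `t ∈ I` the
bound `G(t,s) ≥ λ G(s+α-1,s)` gives `y(t) ≥ r₁`, a contradiction.
-/

open Finset Real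

section GammaRatio

variable {a c : ℝ}

noncomputable def gammaRatio (a : ℝ) (k : ℕ) : ℝ := Gamma (a + k) / Gamma (k + 1)

@[simp] lemma gammaRatio_zero (a : ℝ) : gammaRatio a 0 = Gamma a := by simp [gammaRatio]

lemma gammaRatio_two (k : ℕ) : gammaRatio 2 k = k + 1 := by
  rw [gammaRatio, show (2 : ℝ) + k = (k + 1 : ℝ) + 1 by ring, Gamma_add_one (by positivity),
    mul_div_cancel_right₀ _ (Gamma_pos_of_pos (by positivity)).ne']

lemma gammaRatio_pos (ha : 0 < a) (k : ℕ) : 0 < gammaRatio a k :=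
  div_pos (Gamma_pos_of_pos (by positivity)) (Gamma_pos_of_pos (by positivity))

lemma gammaRatio_succ_mul (ha : 0 < a) (k : ℕ) :
    (k + 1) * gammaRatio a (k + 1) = (a + k) * gammaRatio a k := by
  simp only [gammaRatio, Nat.cast_succ, ← add_assoc, Gamma_add_one (show a + k ≠ 0 by positivity),
    Gamma_add_one (show (k : ℝ) + 1 ≠ 0 by positivity)]
  field_simp

lemma gammaRatio_succ_sub (ha : 0 < a) (k : ℕ) :
    gammaRatio a (k + 1) - gammaRatio a k = (a - 1) * gammaRatio (a - 1) (k + 1) := by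
  have e : (k + 1 : ℝ) * gammaRatio (a - 1) (k + 1) = gammaRatio a k := by
    simp only [gammaRatio, Nat.cast_succ]
    rw [show a - 1 + (k + 1) = a + k by ring, Gamma_add_one (show (k : ℝ) + 1 ≠ 0 by positivity)]
    field_simp
  apply mul_left_cancel₀ (show (k + 1 : ℝ) ≠ 0 by positivity)
  linear_combination gammaRatio_succ_mul ha k - (a - 1) * e

lemma gammaRatio_antitone (hc0 : 0 < c) (hc1 : c ≤ 1) : Antitone (gammaRatio c) := by
  refine antitone_nat_of_succ_le fun k => ?_
  have := gammaRatio_succ_mul hc0 k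
  have := gammaRatio_pos hc0 k
  have := gammaRatio_pos hc0 (k + 1)
  nlinarith

/-- Chu–Vandermonde: `gammaRatio a k / Γ(a)` is the `k`-th coefficient of `(1 - x) ^ (-a)`, and
`(1 - x) ^ (-a) * (1 - x) ^ (-c) = (1 - x) ^ (-(a + c))`. -/
lemma gammaRatio_sum_antidiagonal (ha : 0 < a) (hc : 0 < c) (k : ℕ) :
    Gamma (a + c) * ∑ p ∈ antidiagonal k, gammaRatio a p.1 * gammaRatio c p.2 =
      Gamma a * Gamma c * gammaRatio (a + c) k := by
  induction k with
  | zero => simp; ring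
  | succ k ih =>
    set S := fun k => ∑ p ∈ antidiagonal k, gammaRatio a p.1 * gammaRatio c p.2
    suffices h : (k + 1 : ℝ) * S (k + 1) = (a + c + k) * S k by
      apply mul_left_cancel₀ (show (k + 1 : ℝ) ≠ 0 by positivity)
      linear_combination Gamma (a + c) * h + (a + c + k) * ih -
        Gamma a * Gamma c * gammaRatio_succ_mul (add_pos ha hc) k
    have hsplit : ∀ p ∈ antidiagonal (k + 1),
        (k + 1 : ℝ) * (gammaRatio a p.1 * gammaRatio c p.2) = p.1 * gammaRatio a p.1 *
          gammaRatio c p.2 + gammaRatio a p.1 * (p.2 * gammaRatio c p.2) := by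
      intro p hp
      have : (p.1 : ℝ) + p.2 = k + 1 := by exact_mod_cast mem_antidiagonal.mp hp
      linear_combination (-(gammaRatio a p.1 * gammaRatio c p.2)) * this
    simp only [S, mul_sum, sum_congr rfl hsplit, sum_add_distrib]
    rw [Nat.sum_antidiagonal_succ, Nat.sum_antidiagonal_succ']
    simp only [Nat.cast_zero, zero_mul, mul_zero, zero_add, Nat.cast_succ, gammaRatio_succ_mul ha,
      gammaRatio_succ_mul hc, ← sum_add_distrib]
    refine sum_congr rfl fun p hp => ?_
    have : (p.1 : ℝ) + p.2 = k := by exact_mod_cast mem_antidiagonal.mp hp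
    linear_combination (gammaRatio a p.1 * gammaRatio c p.2) * this

/-- At the node `t = α - 2 + m`, `shiftedGammaRatio α 1 m = t^[α-1]` and
`shiftedGammaRatio α (s + 2) m = (t - s - 1)^[α-1]` (see `fp_natCast` and `G_natCast`). -/
noncomputable def shiftedGammaRatio (a : ℝ) (d m : ℕ) : ℝ :=
  if d ≤ m then gammaRatio a (m - d) else 0

lemma shiftedGammaRatio_of_lt {d m : ℕ} (h : m < d) : shiftedGammaRatio a d m = 0 :=
  if_neg (by omega)

lemma shiftedGammaRatio_of_le {d m : ℕ} (h : d ≤ m) :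
    shiftedGammaRatio a d m = gammaRatio a (m - d) :=
  if_pos h

lemma shiftedGammaRatio_nonneg (ha : 0 < a) (d m : ℕ) : 0 ≤ shiftedGammaRatio a d m := by
  unfold shiftedGammaRatio
  split_ifs
  exacts [(gammaRatio_pos ha _).le, le_rfl]

lemma shiftedGammaRatio_two (d k : ℕ) : shiftedGammaRatio 2 d k = ((k + 1 - d : ℕ) : ℝ) := by
  unfold shiftedGammaRatio
  split_ifs with h
  · rw [gammaRatio_two, show k + 1 - d = k - d + 1 by omega]; push_cast; ring
  · simp [show k + 1 - d = 0 by omega]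

lemma shiftedGammaRatio_succ_sub (ha : 1 < a) (d m : ℕ) :
    shiftedGammaRatio a (d + 1) (m + 1) - shiftedGammaRatio a (d + 1) m =
      (a - 1) * shiftedGammaRatio (a - 1) d m := by
  rcases lt_trichotomy m d with h | rfl | h
  · rw [shiftedGammaRatio_of_lt (by omega), shiftedGammaRatio_of_lt (by omega),
      shiftedGammaRatio_of_lt h]
    ring
  · simp [shiftedGammaRatio, ← Gamma_add_one (show a - 1 ≠ 0 by linarith)]
  · rw [shiftedGammaRatio_of_le (by omega), shiftedGammaRatio_of_le (by omega),
      shiftedGammaRatio_of_le h.le, show m + 1 - (d + 1) = m - (d + 1) + 1 by omega,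
      gammaRatio_succ_sub (by linarith), show m - (d + 1) + 1 = m - d by omega]

lemma monotone_shiftedGammaRatio (ha : 1 < a) (d : ℕ) :
    Monotone (shiftedGammaRatio a (d + 1)) := by
  refine monotone_nat_of_le_succ fun m => ?_
  have := shiftedGammaRatio_succ_sub ha d m
  have := shiftedGammaRatio_nonneg (by linarith : 0 < a - 1) d m
  nlinarith

lemma gammaRatio_sum_mul_shiftedGammaRatio (ha : 0 < a) (hc : 0 < c) (d k : ℕ) :
    Gamma (a + c) * ∑ j ∈ range (k + 1), gammaRatio c (k - j) * shiftedGammaRatio a d j =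
      Gamma a * Gamma c * shiftedGammaRatio (a + c) d k := by
  rcases lt_or_ge k d with hkd | hdk
  · rw [sum_eq_zero fun j hj => by rw [shiftedGammaRatio_of_lt (by simp at hj; omega), mul_zero],
      shiftedGammaRatio_of_lt hkd]
    simp
  obtain ⟨n, rfl⟩ := Nat.exists_eq_add_of_le hdk
  rw [show d + n + 1 = d + (n + 1) by ring, sum_range_add,
    sum_eq_zero fun j hj => by rw [shiftedGammaRatio_of_lt (by simpa using hj), mul_zero], zero_add,
    shiftedGammaRatio_of_le hdk, Nat.add_sub_cancel_left, ← gammaRatio_sum_antidiagonal ha hc,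
    Nat.sum_antidiagonal_eq_sum_range_succ (fun i j => gammaRatio a i * gammaRatio c j)]
  refine congrArg _ (sum_congr rfl fun i _ => ?_)
  rw [shiftedGammaRatio_of_le (by omega), Nat.add_sub_cancel_left,
    show d + n - (d + i) = n - i by omega, mul_comm]

end GammaRatio

section FracSum

variable {α : ℝ}

noncomputable def fracSumKernel (α : ℝ) (m : ℕ) : ℝ :=
  if α = 2 then (if m = 0 then 1 else 0) else gammaRatio (2 - α) m / Gamma (2 - α)

lemma fracSum_eq_sum (α : ℝ) (y : ℕ → ℝ) (k : ℕ) :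
    fracSum α y k = ∑ j ∈ range (k + 1), fracSumKernel α (k - j) * y j := by
  unfold fracSum fracSumKernel
  split_ifs with hα
  · rw [sum_range_succ, Nat.sub_self, if_pos rfl, one_mul, sum_eq_zero, zero_add]
    intro j hj
    rw [if_neg (by simp at hj; omega), zero_mul]
  · rw [mul_sum]
    refine sum_congr rfl fun j hj => ?_
    have hj : j ≤ k := Nat.lt_succ_iff.mp (mem_range.mp hj)
    simp only [fp, gammaRatio, Nat.cast_sub hj]
    rw [show (k : ℝ) - j + 1 - α + 1 = 2 - α + (k - j) by ring,
      show (k : ℝ) - j + 1 - α - (1 - α) + 1 = k - j + 1 by ring]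
    ring

lemma fracSumKernel_zero (hα2 : α ≤ 2) : fracSumKernel α 0 = 1 := by
  rcases hα2.lt_or_eq with h | h
  · rw [fracSumKernel, if_neg h.ne, gammaRatio_zero, div_self (Gamma_pos_of_pos (by linarith)).ne']
  · simp [fracSumKernel, h]

noncomputable def fracSumCLM (α : ℝ) (k : ℕ) : (ℕ → ℝ) →L[ℝ] ℝ :=
  ∑ j ∈ range (k + 1), fracSumKernel α (k - j) • ContinuousLinearMap.proj j

lemma fracSumCLM_apply (α : ℝ) (k : ℕ) (y : ℕ → ℝ) : fracSumCLM α k y = fracSum α y k := by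
  simp [fracSumCLM, fracSum_eq_sum]

noncomputable def fracDiffCLM (α : ℝ) (t : ℕ) : (ℕ → ℝ) →L[ℝ] ℝ :=
  fracSumCLM α (t + 2) - (2 : ℝ) • fracSumCLM α (t + 1) + fracSumCLM α t

lemma fracDiffCLM_apply (α : ℝ) (t : ℕ) (y : ℕ → ℝ) : fracDiffCLM α t y = fracDiff α y t := by
  simp [fracDiffCLM, fracSumCLM_apply, fracDiff]

lemma fracSum_shiftedGammaRatio (hα1 : 1 < α) (hα2 : α ≤ 2) (d k : ℕ) :
    fracSum α (shiftedGammaRatio α d) k = Gamma α * ((k + 1 - d : ℕ) : ℝ) := by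
  rcases hα2.lt_or_eq with hα2 | rfl
  · have key := gammaRatio_sum_mul_shiftedGammaRatio (by linarith : 0 < α)
      (by linarith : 0 < 2 - α) d k
    rw [show α + (2 - α) = 2 by ring, Gamma_two, one_mul, shiftedGammaRatio_two] at key
    simp only [fracSum_eq_sum, fracSumKernel, if_neg hα2.ne, div_mul_eq_mul_div, ← sum_div, key]
    field_simp [(Gamma_pos_of_pos (by linarith : 0 < 2 - α)).ne']
  · rw [fracSum, if_pos rfl, shiftedGammaRatio_two, Gamma_two, one_mul]

lemma fracDiff_shiftedGammaRatio (hα1 : 1 < α) (hα2 : α ≤ 2) (d t : ℕ) :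
    fracDiff α (shiftedGammaRatio α d) t = if d = t + 2 then Gamma α else 0 := by
  simp only [fracDiff, fracSum_shiftedGammaRatio hα1 hα2]
  split_ifs with h
  · subst h; simp
  rcases le_or_gt d (t + 1) with h' | h'
  · rw [show t + 2 + 1 - d = t + 1 - d + 2 by omega, show t + 1 + 1 - d = t + 1 - d + 1 by omega]
    push_cast; ring
  · simp [show t + 2 + 1 - d = 0 by omega, show t + 1 + 1 - d = 0 by omega,
      show t + 1 - d = 0 by omega]

/-- The leading coefficient of `Δ^α` is `1`. -/
lemma fracDiff_sub_fracDiff (hα2 : α ≤ 2) {x w : ℕ → ℝ} {n : ℕ} (h : ∀ k < n + 2, x k = w k) :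
    fracDiff α x n - fracDiff α w n = x (n + 2) - w (n + 2) := by
  have hv : ∀ k < n + 2, (x - w) k = 0 := fun k hk => sub_eq_zero.mpr (h k hk)
  have hlow : ∀ k ≤ n + 1, fracSum α (x - w) k = 0 := fun k hk =>
    (fracSum_eq_sum _ _ _).trans <| sum_eq_zero fun j hj => by
      rw [hv j (by simp at hj; omega), mul_zero]
  rw [← fracDiffCLM_apply, ← fracDiffCLM_apply, ← map_sub, fracDiffCLM_apply, fracDiff,
    hlow (n + 1) le_rfl, hlow n (by omega), fracSum_eq_sum, sum_range_succ,
    sum_eq_zero fun j hj => by rw [hv j (by simpa using hj), mul_zero], Nat.sub_self,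
    fracSumKernel_zero hα2]
  simp

lemma eqOn_of_fracDiff_eq (hα2 : α ≤ 2) {x w : ℕ → ℝ} (h0 : x 0 = w 0) (h1 : x 1 = w 1)
    {N : ℕ} (h : ∀ t < N, fracDiff α x t = fracDiff α w t) : ∀ m ≤ N + 1, x m = w m := by
  intro m
  induction m using Nat.strong_induction_on with
  | _ m ih =>
    match m with
    | 0 => exact fun _ => h0
    | 1 => exact fun _ => h1
    | n + 2 =>
      intro hn
      have := fracDiff_sub_fracDiff hα2 fun k hk => ih k hk (by omega)
      rw [h n (by omega), sub_self] at this
      linarith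

end FracSum

noncomputable def shoot (ψ : (ℕ → ℝ) → ℕ → ℝ) (c : ℝ) : ℕ → ℝ
  | 0 => 0
  | 1 => c
  | n + 2 => ψ (fun k => if k < n + 2 then shoot ψ c k else 0) n

lemma continuous_shoot {ψ : (ℕ → ℝ) → ℕ → ℝ} (hψ : ∀ n, Continuous fun x => ψ x n) (k : ℕ) :
    Continuous fun c => shoot ψ c k := by
  induction k using Nat.strong_induction_on with
  | _ k ih =>
    match k with
    | 0 => simpa [shoot] using continuous_const
    | 1 => simpa [shoot] using continuous_id'
    | n + 2 =>
      simp only [shoot]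
      refine (hψ n).comp (continuous_pi fun k => ?_)
      split_ifs with hk
      · exact ih k hk
      · exact continuous_const

lemma exists_continuous_fracDiff_solution {α : ℝ} (hα2 : α ≤ 2) {g : ℕ → ℝ → ℝ}
    (hg : ∀ t, Continuous (g t)) :
    ∃ Y : ℝ → ℕ → ℝ, (∀ k, Continuous fun c => Y c k) ∧
      ∀ c, Y c 0 = 0 ∧ Y c 1 = c ∧ ∀ t, fracDiff α (Y c) t + g t (Y c (t + 1)) = 0 := by
  set ψ : (ℕ → ℝ) → ℕ → ℝ := fun x n => -fracDiff α x n - g n (x (n + 1))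
  have hψ (n : ℕ) : Continuous fun x => ψ x n := by
    simp only [ψ, ← fracDiffCLM_apply]
    fun_prop
  refine ⟨shoot ψ, continuous_shoot hψ, fun c => ⟨by simp [shoot], by simp [shoot], fun t => ?_⟩⟩
  set x := fun k => if k < t + 2 then shoot ψ c k else 0
  have hrec : shoot ψ c (t + 2) = -fracDiff α x t - g t (shoot ψ c (t + 1)) := by
    simp [shoot, ψ, x]
  have hx : fracDiff α (shoot ψ c) t - fracDiff α x t = shoot ψ c (t + 2) - x (t + 2) :=
    fracDiff_sub_fracDiff hα2 fun k hk => by simp [x, hk]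
  simp only [x, lt_irrefl, if_false, sub_zero] at hx
  linarith

lemma nonneg_and_le_peak_of_unimodal {g : ℕ → ℝ} {p N : ℕ} (hpN : p ≤ N)
    (hup : ∀ m < p, g m ≤ g (m + 1)) (hdown : ∀ m, p ≤ m → m < N → g (m + 1) ≤ g m)
    (h0 : g 0 = 0) (hN : g N = 0) {m : ℕ} (hm : m ≤ N) : 0 ≤ g m ∧ g m ≤ g p := by
  have hmono : MonotoneOn g (Set.Iic p) := monotoneOn_of_le_succ Set.ordConnected_Iic
    fun a _ _ ha => hup a (by simpa using ha)
  have hanti : AntitoneOn g (Set.Icc p N) := antitoneOn_of_succ_le Set.ordConnected_Icc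
    fun a _ ha ha' => hdown a ha.1 (by simpa using ha'.2)
  rcases le_total m p with h | h
  · exact ⟨h0 ▸ hmono (Nat.zero_le p) h (Nat.zero_le m), hmono h (le_refl p) h⟩
  · exact ⟨hN ▸ hanti ⟨h, hm⟩ ⟨hpN, le_rfl⟩ hm, hanti ⟨le_rfl, hpN⟩ ⟨h, hm⟩ h⟩

lemma fp_natCast (a : ℝ) (n : ℕ) : fp (a - 2 + n) (a - 1) = shiftedGammaRatio a 1 n := by
  rcases n with _ | n
  · rw [fp, shiftedGammaRatio_of_lt Nat.zero_lt_one, Nat.cast_zero,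
      show a - 2 + 0 - (a - 1) + 1 = 0 by ring, Gamma_zero, div_zero]
  · simp only [fp, shiftedGammaRatio, gammaRatio, Nat.add_sub_cancel]
    congr 1 <;> push_cast <;> ring_nf

section Green

variable {α : ℝ} {b s : ℕ}

noncomputable def greenWeight (α : ℝ) (b s : ℕ) : ℝ :=
  shiftedGammaRatio α 1 (b + 2 - s) / shiftedGammaRatio α 1 (b + 3)

lemma greenWeight_nonneg (hα1 : 1 < α) : 0 ≤ greenWeight α b s :=
  div_nonneg (shiftedGammaRatio_nonneg (by linarith) _ _)
    (shiftedGammaRatio_nonneg (by linarith) _ _)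

lemma greenWeight_le_one (hα1 : 1 < α) : greenWeight α b s ≤ 1 := by
  refine div_le_one_of_le₀ (monotone_shiftedGammaRatio hα1 0 (by omega)) ?_
  exact shiftedGammaRatio_nonneg (by linarith) _ _

lemma G_natCast (hs : s ≤ b + 1) (m : ℕ) :
    G α b (α - 2 + m) s =
      (greenWeight α b s * shiftedGammaRatio α 1 m - shiftedGammaRatio α (s + 2) m) / Gamma α := by
  have e1 : α + b - s = α - 2 + ((b + 2 - s : ℕ) : ℝ) := by
    rw [Nat.cast_sub (by omega)]; push_cast; ring
  have e2 : α + b + 1 = α - 2 + ((b + 3 : ℕ) : ℝ) := by push_cast; ring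
  unfold G greenWeight
  rw [e1, e2, fp_natCast, fp_natCast, fp_natCast]
  split_ifs with h
  · have hm : s + 1 ≤ m := by exact_mod_cast (show (s : ℝ) + 1 ≤ m by linarith)
    have e3 : α - 2 + m - s - 1 = α - 2 + ((m - (s + 1) : ℕ) : ℝ) := by
      rw [Nat.cast_sub hm]; push_cast; ring
    rw [e3, fp_natCast]
    unfold shiftedGammaRatio
    rw [show m - (s + 1) - 1 = m - (s + 2) by omega]
    simp only [show 1 ≤ m - (s + 1) ↔ s + 2 ≤ m by omega]
    ring
  · have hm : m < s + 2 := by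
      by_contra! hm
      have : (s : ℝ) + 2 ≤ m := by exact_mod_cast hm
      exact h (by linarith)
    rw [shiftedGammaRatio_of_lt hm]
    ring

lemma G_natCast_succ_sub (hα1 : 1 < α) (hs : s ≤ b + 1) (m : ℕ) :
    G α b (α - 2 + (m + 1 : ℕ)) s - G α b (α - 2 + m) s = (α - 1) / Gamma α *
      (greenWeight α b s * gammaRatio (α - 1) m - shiftedGammaRatio (α - 1) (s + 1) m) := by
  have hu := shiftedGammaRatio_succ_sub hα1 0 m
  have hv := shiftedGammaRatio_succ_sub hα1 (s + 1) m
  rw [shiftedGammaRatio_of_le (Nat.zero_le m), Nat.sub_zero] at hu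
  rw [G_natCast hs, G_natCast hs, ← sub_div, div_eq_iff (Gamma_pos_of_pos (by linarith)).ne']
  field_simp
  linear_combination greenWeight α b s * hu - hv

lemma G_natCast_zero (hs : s ≤ b + 1) : G α b (α - 2 + (0 : ℕ)) s = 0 := by
  rw [G_natCast hs, shiftedGammaRatio_of_lt Nat.zero_lt_one, shiftedGammaRatio_of_lt (by omega)]
  simp

lemma G_natCast_right (hα1 : 1 < α) (hs : s ≤ b + 1) : G α b (α - 2 + (b + 3 : ℕ)) s = 0 := by
  have hpos : 0 < shiftedGammaRatio α 1 (b + 3) := by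
    rw [shiftedGammaRatio_of_le (by omega)]; exact gammaRatio_pos (by linarith) _
  rw [G_natCast hs, greenWeight, div_mul_cancel₀ _ hpos.ne', shiftedGammaRatio_of_le (by omega),
    shiftedGammaRatio_of_le (by omega), show b + 2 - s - 1 = b + 3 - (s + 2) by omega, sub_self,
    zero_div]

lemma G_natCast_nonneg_and_le_diag (hα1 : 1 < α) (hα2 : α ≤ 2) (hs : s ≤ b + 1) {m : ℕ}
    (hm : m ≤ b + 3) :
    0 ≤ G α b (α - 2 + m) s ∧ G α b (α - 2 + m) s ≤ G α b (s + α - 1) s := by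
  have hcoef : 0 ≤ (α - 1) / Gamma α :=
    div_nonneg (by linarith) (Gamma_pos_of_pos (by linarith)).le
  have hκ0 := greenWeight_nonneg (b := b) (s := s) hα1
  have hκ1 := greenWeight_le_one (b := b) (s := s) hα1
  rw [show (s : ℝ) + α - 1 = α - 2 + (s + 1 : ℕ) by push_cast; ring]
  refine nonneg_and_le_peak_of_unimodal (g := fun m : ℕ => G α b (α - 2 + m) s) (by omega)
    (fun m hm' => ?_) (fun m hm' _ => ?_) (G_natCast_zero hs) (G_natCast_right hα1 hs) hm
  · have := G_natCast_succ_sub hα1 hs m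
    rw [shiftedGammaRatio_of_lt hm', sub_zero] at this
    have := gammaRatio_pos (by linarith : 0 < α - 1) m
    nlinarith [mul_nonneg hcoef (mul_nonneg hκ0 this.le)]
  · have := G_natCast_succ_sub hα1 hs m
    rw [shiftedGammaRatio_of_le hm'] at this
    have hanti :=
      gammaRatio_antitone (by linarith : 0 < α - 1) (by linarith) (Nat.sub_le m (s + 1))
    have := gammaRatio_pos (by linarith : 0 < α - 1) m
    have : greenWeight α b s * gammaRatio (α - 1) m ≤ gammaRatio (α - 1) (m - (s + 1)) := by
      nlinarith
    nlinarith [mul_le_mul_of_nonneg_left this hcoef]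

lemma fracDiff_G_natCast (hα1 : 1 < α) (hα2 : α ≤ 2) (hs : s ≤ b + 1) (t : ℕ) :
    fracDiff α (fun m : ℕ => G α b (α - 2 + m) s) t = if t = s then -1 else 0 := by
  have hcol : (fun m : ℕ => G α b (α - 2 + m) s) = (greenWeight α b s / Gamma α) •
      shiftedGammaRatio α 1 - (Gamma α)⁻¹ • shiftedGammaRatio α (s + 2) := by
    funext m
    simp only [G_natCast hs, Pi.sub_apply, Pi.smul_apply, smul_eq_mul]
    ring
  have hΓ := (Gamma_pos_of_pos (by linarith : 0 < α)).ne'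
  rw [hcol, ← fracDiffCLM_apply, map_sub, map_smul, map_smul, fracDiffCLM_apply,
    fracDiffCLM_apply, fracDiff_shiftedGammaRatio hα1 hα2, fracDiff_shiftedGammaRatio hα1 hα2,
    if_neg (by omega)]
  by_cases h : t = s
  · simp [h, hΓ]
  · simp [h, Ne.symm h]

noncomputable def green (α : ℝ) (b : ℕ) (h : ℕ → ℝ) (m : ℕ) : ℝ :=
  ∑ s ∈ range (b + 2), G α b (α - 2 + m) s * h s

variable {h : ℕ → ℝ}

lemma green_congr {h' : ℕ → ℝ} (hh : ∀ s ≤ b + 1, h s = h' s) (m : ℕ) :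
    green α b h m = green α b h' m :=
  sum_congr rfl fun s hs => by rw [hh s (by simp at hs; omega)]

lemma green_zero : green α b h 0 = 0 :=
  sum_eq_zero fun s hs => by rw [G_natCast_zero (by simp at hs; omega), zero_mul]

lemma green_right (hα1 : 1 < α) : green α b h (b + 3) = 0 :=
  sum_eq_zero fun s hs => by rw [G_natCast_right hα1 (by simp at hs; omega), zero_mul]

lemma fracDiff_green (hα1 : 1 < α) (hα2 : α ≤ 2) {t : ℕ} (ht : t ≤ b + 1) :
    fracDiff α (green α b h) t = -h t := by
  have hsum : green α b h = ∑ s ∈ range (b + 2), h s • fun m : ℕ => G α b (α - 2 + m) s := by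
    funext m
    simp [green, mul_comm]
  rw [hsum, ← fracDiffCLM_apply, map_sum]
  simp only [map_smul, fracDiffCLM_apply, smul_eq_mul]
  rw [sum_congr rfl fun s hs => by rw [fracDiff_G_natCast hα1 hα2 (by simp at hs; omega)]]
  simp [ht, Nat.lt_succ_iff]

lemma sum_le_green (hα1 : 1 < α) (hα2 : α ≤ 2) (hh : ∀ s ≤ b + 1, 0 ≤ h s) {S : Finset ℕ}
    (hS : S ⊆ range (b + 2)) {m : ℕ} (hm : m ≤ b + 3) :
    ∑ s ∈ S, G α b (α - 2 + m) s * h s ≤ green α b h m :=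
  sum_le_sum_of_subset_of_nonneg hS fun s hs _ =>
    have hs : s ≤ b + 1 := by simp at hs; omega
    mul_nonneg (G_natCast_nonneg_and_le_diag hα1 hα2 hs hm).1 (hh s hs)

lemma green_nonneg (hα1 : 1 < α) (hα2 : α ≤ 2) (hh : ∀ s ≤ b + 1, 0 ≤ h s) {m : ℕ}
    (hm : m ≤ b + 3) : 0 ≤ green α b h m := by
  simpa using sum_le_green hα1 hα2 hh (empty_subset _) hm

lemma green_le (hα1 : 1 < α) (hα2 : α ≤ 2) {q : ℕ → ℝ} {K : ℝ} (hh : ∀ s ≤ b + 1, 0 ≤ h s)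
    (hK : ∀ s ≤ b + 1, h s ≤ K * q s) {m : ℕ} (hm : m ≤ b + 3) :
    green α b h m ≤ K * ∑ s ∈ range (b + 2), G α b (s + α - 1) s * q s := by
  rw [mul_sum]
  refine sum_le_sum fun s hs => ?_
  have hs : s ≤ b + 1 := by simp at hs; omega
  obtain ⟨hG0, hGd⟩ := G_natCast_nonneg_and_le_diag hα1 hα2 hs hm
  calc G α b (α - 2 + m) s * h s ≤ G α b (s + α - 1) s * (K * q s) :=
        mul_le_mul hGd (hK s hs) (hh s hs) (hG0.trans hGd)
    _ = K * (G α b (s + α - 1) s * q s) := by ring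

lemma eq_add_green_of_fracDiff (hα1 : 1 < α) (hα2 : α ≤ 2) {y : ℕ → ℝ} (hy0 : y 0 = 0)
    (hy : ∀ t ≤ b + 1, fracDiff α y t = -h t) {m : ℕ} (hm : m ≤ b + 3) :
    y m = (y 1 - green α b h 1) / Gamma α * shiftedGammaRatio α 1 m + green α b h m := by
  have hΓ := (Gamma_pos_of_pos (by linarith : 0 < α)).ne'
  set w := ((y 1 - green α b h 1) / Gamma α) • shiftedGammaRatio α 1 + green α b h
  have hw : ∀ t < b + 2, fracDiff α y t = fracDiff α w t := fun t ht => by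
    rw [← fracDiffCLM_apply α t w, map_add, map_smul, fracDiffCLM_apply, fracDiffCLM_apply,
      fracDiff_shiftedGammaRatio hα1 hα2, if_neg (by omega), fracDiff_green hα1 hα2 (by omega),
      hy t (by omega)]
    simp
  refine eqOn_of_fracDiff_eq hα2 ?_ ?_ hw m hm
  · simp [w, hy0, green_zero, shiftedGammaRatio_of_lt]
  · simp [w, shiftedGammaRatio_of_le, hΓ]

lemma exists_fracDiff_solution_eq_green (hα1 : 1 < α) (hα2 : α ≤ 2) {q : ℕ → ℝ}
    (hq : ∀ s ≤ b + 1, 0 ≤ q s) {F : ℝ → ℝ} (hF : Continuous F) (hF0 : ∀ x, 0 ≤ F x) {K : ℝ}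
    (hFK : ∀ x, F x ≤ K) :
    ∃ y : ℕ → ℝ, (∀ t, fracDiff α y t + q t * F (y (t + 1)) = 0) ∧ y 0 = 0 ∧
      ∀ m ≤ b + 3, y m = green α b (fun s => q s * F (y (s + 1))) m := by
  obtain ⟨Y, hYc, hY⟩ := exists_continuous_fracDiff_solution hα2 (g := fun t x => q t * F x)
    fun t => continuous_const.mul hF
  set H := fun c s => q s * F (Y c (s + 1))
  have hH0 (c : ℝ) : ∀ s ≤ b + 1, 0 ≤ H c s := fun s hs => mul_nonneg (hq s hs) (hF0 _)
  have hHK (c : ℝ) : ∀ s ≤ b + 1, H c s ≤ K * q s := fun s hs => by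
    simpa only [H, mul_comm K] using mul_le_mul_of_nonneg_left (hFK _) (hq s hs)
  have hrep (c : ℝ) {m : ℕ} (hm : m ≤ b + 3) :
      Y c m = (c - green α b (H c) 1) / Gamma α * shiftedGammaRatio α 1 m + green α b (H c) m := by
    obtain ⟨h0, h1, heq⟩ := hY c
    have := eq_add_green_of_fracDiff (h := H c) hα1 hα2 h0 (fun t _ => by linarith [heq t]) hm
    rwa [h1] at this
  have hκ : 0 < shiftedGammaRatio α 1 (b + 3) / Gamma α := by
    rw [shiftedGammaRatio_of_le (show 1 ≤ b + 3 by omega)]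
    exact div_pos (gammaRatio_pos (by linarith) _) (Gamma_pos_of_pos (by linarith))
  set κ := shiftedGammaRatio α 1 (b + 3) / Gamma α
  have hend (c : ℝ) : Y c (b + 3) = (c - green α b (H c) 1) * κ := by
    rw [hrep c le_rfl, green_right hα1]; ring
  set C := K * ∑ s ∈ range (b + 2), G α b (s + α - 1) s * q s
  have hlo (c : ℝ) : 0 ≤ green α b (H c) 1 := green_nonneg hα1 hα2 (hH0 c) (by omega)
  have hhi (c : ℝ) : green α b (H c) 1 ≤ C := green_le hα1 hα2 (hH0 c) (hHK c) (by omega)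
  have hsign : (0 : ℝ) ∈ Set.Icc (Y 0 (b + 3)) (Y C (b + 3)) := by
    rw [hend, hend]
    exact ⟨by nlinarith [hlo 0], by nlinarith [hhi C]⟩
  obtain ⟨c₀, -, hc₀⟩ :=
    intermediate_value_Icc ((hlo 0).trans (hhi 0)) (hYc (b + 3)).continuousOn hsign
  have hc₀_eq : c₀ = green α b (H c₀) 1 := by
    simp only [hend] at hc₀
    linarith [(mul_eq_zero.mp hc₀).resolve_right hκ.ne']
  refine ⟨Y c₀, (hY c₀).2.2, (hY c₀).1, fun m hm => ?_⟩
  rw [hrep c₀ hm, ← hc₀_eq, sub_self, zero_div, zero_mul, zero_add]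

lemma exists_fracDiff_solution_mem_Icc (hα1 : 1 < α) (hα2 : α ≤ 2) {q : ℕ → ℝ}
    (hq : ∀ s ≤ b + 1, 0 ≤ q s) (hγ : 0 < ∑ s ∈ range (b + 2), G α b (s + α - 1) s * q s)
    {f : ℝ → ℝ} (hf0 : ∀ x, 0 ≤ x → 0 ≤ f x) (hfc : ContinuousOn f (Set.Ici 0)) {r : ℝ}
    (hr : 0 ≤ r)
    (hfr : ∀ x, 0 ≤ x → x ≤ r → f x ≤ (∑ s ∈ range (b + 2), G α b (s + α - 1) s * q s)⁻¹ * r) :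
    ∃ y : ℕ → ℝ, (∀ t ≤ b + 1, fracDiff α y t + q t * f (y (t + 1)) = 0) ∧ y 0 = 0 ∧
      y (b + 3) = 0 ∧ (∀ m ≤ b + 3, y m ∈ Set.Icc 0 r) ∧
      ∀ m ≤ b + 3, y m = green α b (fun s => q s * f (y (s + 1))) m := by
  set γ := ∑ s ∈ range (b + 2), G α b (s + α - 1) s * q s with hγ_def
  set clamp := fun x => (Set.projIcc 0 r hr x : ℝ)
  have hclamp (x : ℝ) : clamp x ∈ Set.Icc 0 r := (Set.projIcc 0 r hr x).2
  have hF : Continuous fun x => f (clamp x) := hfc.comp_continuous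
    (continuous_subtype_val.comp continuous_projIcc) fun x => (hclamp x).1
  obtain ⟨y, hyeq, hy0, hyG⟩ := exists_fracDiff_solution_eq_green hα1 hα2 hq hF
    (fun x => hf0 _ (hclamp x).1) (fun x => hfr _ (hclamp x).1 (hclamp x).2)
  have hH0 : ∀ s ≤ b + 1, 0 ≤ q s * f (clamp (y (s + 1))) :=
    fun s hs => mul_nonneg (hq s hs) (hf0 _ (hclamp _).1)
  have hy_mem (m : ℕ) (hm : m ≤ b + 3) : y m ∈ Set.Icc 0 r := by
    refine hyG m hm ▸ ⟨green_nonneg hα1 hα2 hH0 hm,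
      (green_le (K := γ⁻¹ * r) hα1 hα2 hH0 (fun s hs => ?_) hm).trans_eq
        (by rw [← hγ_def]; field_simp)⟩
    simpa only [mul_comm _ (q s)] using
      mul_le_mul_of_nonneg_left (hfr _ (hclamp _).1 (hclamp _).2) (hq s hs)
  have hfy (m : ℕ) (hm : m ≤ b + 3) : f (clamp (y m)) = f (y m) := by
    simp [clamp, Set.projIcc_of_mem hr (hy_mem m hm)]
  refine ⟨y, fun t ht => hfy (t + 1) (by omega) ▸ hyeq t, hy0, ?_, hy_mem, fun m hm => ?_⟩
  · rw [hyG _ le_rfl, green_right hα1]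
  · rw [hyG m hm]
    exact green_congr (fun s hs => by rw [hfy (s + 1) (by omega)]) m

lemma mul_sum_le_green (hα1 : 1 < α) (hα2 : α ≤ 2) {q h : ℕ → ℝ} {lam L : ℝ} {S : Finset ℕ}
    (hS : S ⊆ range (b + 2)) (hq : ∀ s ≤ b + 1, 0 ≤ q s) (hL : 0 ≤ L)
    (hh0 : ∀ s ≤ b + 1, 0 ≤ h s) (hh : ∀ s ∈ S, q s * L ≤ h s) {k : ℕ} (hk : k ≤ b + 1)
    (hG : ∀ s ≤ b + 1, lam * G α b (s + α - 1) s ≤ G α b (α - 1 + k) s) :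
    L * ∑ s ∈ S, lam * G α b (s + α - 1) s * q s ≤ green α b h (k + 1) := by
  have hnode : α - 2 + ((k + 1 : ℕ) : ℝ) = α - 1 + k := by push_cast; ring
  refine le_trans ?_ (hnode ▸ sum_le_green hα1 hα2 hh0 hS (by omega))
  rw [mul_sum]
  refine sum_le_sum fun s hs => ?_
  have hs' : s ≤ b + 1 := by have := hS hs; simp at this; omega
  have hG0 := (hnode ▸ G_natCast_nonneg_and_le_diag hα1 hα2 hs' (m := k + 1) (by omega)).1
  calc L * (lam * G α b (s + α - 1) s * q s) = lam * G α b (s + α - 1) s * (q s * L) := by ring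
    _ ≤ G α b (α - 1 + k) s * h s :=
      mul_le_mul (hG s hs') (hh s hs) (mul_nonneg (hq s hs') hL) hG0

end Green

lemma exists_node_mem_middle_half {α : ℝ} (hα1 : 1 < α) (hα2 : α ≤ 2) {b : ℕ} (hb : 1 ≤ b) :
    ∃ k : ℕ, k ≤ b + 1 ∧ (b + α) / 4 ≤ α - 1 + k ∧ α - 1 + k ≤ 3 * (b + α) / 4 := by
  have hb' : (1 : ℝ) ≤ b := by exact_mod_cast hb
  rcases le_or_gt ((b + α) / 4 - α + 1) 0 with hL | hL
  · exact ⟨0, by omega, by push_cast; linarith, by push_cast; linarith⟩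
  · have h1 := Nat.le_ceil ((b + α) / 4 - α + 1)
    have h2 := Nat.ceil_lt_add_one hL.le
    refine ⟨⌈(b + α) / 4 - α + 1⌉₊, ?_, by linarith, by linarith⟩
    have : (⌈(b + α) / 4 - α + 1⌉₊ : ℝ) < (b + 2 : ℕ) := by push_cast; linarith
    exact Nat.lt_succ_iff.mp (by exact_mod_cast this)

/-- `y k` stands for `y(α-2+k)` and `q s` for `q(α-1+s)`. -/
theorem statement10 (α : ℝ) (b : ℕ) (hα1 : 1 < α) (hα2 : α ≤ 2) (hb : 2 ≤ b)
    (q : ℕ → ℝ) (hq : ∀ s : ℕ, s ≤ b + 1 → 0 ≤ q s)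
    (lam : ℝ)
    (hG : ∀ s : ℕ, s ≤ b + 1 →
      ∀ k : ℕ, k ≤ b + 1 → (b + α) / 4 ≤ α - 1 + k → α - 1 + k ≤ 3 * (b + α) / 4 →
        lam * G α b ((s : ℝ) + α - 1) s ≤ G α b (α - 1 + k) s)
    (hγ : 0 < ∑ s ∈ Finset.range (b + 2), G α b ((s : ℝ) + α - 1) s * q s)
    (hS : 0 < ∑ s ∈ (Finset.range (b + 2)).filter
        (fun s : ℕ => (b + α) / 4 ≤ (s : ℝ) ∧ (s : ℝ) ≤ 3 * (b + α) / 4),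
        lam * G α b ((s : ℝ) + α - 1) s * q s)
    (f : ℝ → ℝ) (hf0 : ∀ x : ℝ, 0 ≤ x → 0 ≤ f x)
    (hfc : ContinuousOn f (Set.Ici (0 : ℝ)))
    (r₁ r₂ : ℝ) (hr₁ : 0 < r₁) (hr₁₂ : r₁ < r₂)
    (hf1 : ∀ x : ℝ, 0 ≤ x → x ≤ r₁ →
      (∑ s ∈ (Finset.range (b + 2)).filter
          (fun s : ℕ => (b + α) / 4 ≤ (s : ℝ) ∧ (s : ℝ) ≤ 3 * (b + α) / 4),
          lam * G α b ((s : ℝ) + α - 1) s * q s)⁻¹ * r₁ ≤ f x)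
    (hf2 : ∀ x : ℝ, 0 ≤ x → x ≤ r₂ →
      f x ≤ (∑ s ∈ Finset.range (b + 2), G α b ((s : ℝ) + α - 1) s * q s)⁻¹ * r₂) :
    ∃ y : ℕ → ℝ,
      (∀ t : ℕ, t ≤ b + 1 → fracDiff α y t + q t * f (y (t + 1)) = 0) ∧
      y 0 = 0 ∧ y (b + 3) = 0 ∧
      (∀ k : ℕ, k ≤ b + 3 → 0 ≤ y k) ∧
      r₁ ≤ (Finset.range (b + 4)).sup' (Finset.nonempty_range_iff.mpr (by omega))
        (fun k => |y k|) ∧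
      (Finset.range (b + 4)).sup' (Finset.nonempty_range_iff.mpr (by omega))
        (fun k => |y k|) ≤ r₂ := by
  set S := (range (b + 2)).filter fun s : ℕ => (b + α) / 4 ≤ (s : ℝ) ∧ (s : ℝ) ≤ 3 * (b + α) / 4
  obtain ⟨y, hyeq, hy0, hyb, hy_mem, hyG⟩ :=
    exists_fracDiff_solution_mem_Icc hα1 hα2 hq hγ hf0 hfc (by linarith) hf2
  refine ⟨y, hyeq, hy0, hyb, fun k hk => (hy_mem k hk).1, ?_, sup'_le _ _ fun k hk => ?_⟩
  · by_contra! hlt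
    rw [sup'_lt_iff] at hlt
    have hsmall (m : ℕ) (hm : m ≤ b + 3) : y m ≤ r₁ :=
      (le_abs_self _).trans (hlt m (by simp; omega)).le
    have hS_le (s : ℕ) (hs : s ∈ S) : s ≤ b + 1 := by simp [S] at hs; omega
    obtain ⟨k, hkb, hk1, hk2⟩ := exists_node_mem_middle_half hα1 hα2 (b := b) (by omega)
    have hlow := mul_sum_le_green hα1 hα2 (S := S) (filter_subset _ _) hq (by positivity)
      (fun s hs => mul_nonneg (hq s hs) (hf0 _ (hy_mem (s + 1) (by omega)).1))
      (fun s hs => mul_le_mul_of_nonneg_left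
        (hf1 _ (hy_mem (s + 1) (by grind)).1 (hsmall (s + 1) (by grind))) (hq s (hS_le s hs)))
      hkb fun s hs => hG s hs k hkb hk1 hk2
    rw [mul_comm _ r₁, inv_mul_cancel_right₀ hS.ne'] at hlow
    linarith [hyG (k + 1) (by omega), (le_abs_self _).trans_lt (hlt (k + 1) (by simp; omega))]
  · have hk' : k ≤ b + 3 := by simp at hk; omega
    rw [abs_of_nonneg (hy_mem k hk').1]
    exact (hy_mem k hk').2
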